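/- arXiv:2201.10033 — 2 statements merged into one kernel-verified Lean document; each statement's English description precedes it below -/
import Mathlib

section
/- Let r, d be coprime integers with 0 < d < r, and let s, e be integers with 0 < s < r and 0 < sd - re < r. Then the line sa₁ - sa₂ = sd - re does not intersect the line ra₁ = (r+1)a₂ within [0,1]². (Nearly diagonal wall crossings avoid positive walls.) -/
/-- The positive wall `s a₁ - s a₂ = s d - r e` does not intersect the nearly diagonal line
`r a₁ = (r+1) a₂` within `[0,1]²`. -/
theorem stmt_2 (r d s e : ℤ) (hcop : IsCoprime r d) (hd : 0 < d) (hdr : d < r)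
    (hs : 0 < s) (hsr : s < r) (hw : 0 < s * d - r * e) (hwr : s * d - r * e < r) :
    ¬ ∃ a₁ a₂ : ℚ, 0 ≤ a₁ ∧ a₁ ≤ 1 ∧ 0 ≤ a₂ ∧ a₂ ≤ 1 ∧
      (s : ℚ) * a₁ - (s : ℚ) * a₂ = (s : ℚ) * d - (r : ℚ) * e ∧
      (r : ℚ) * a₁ = ((r : ℚ) + 1) * a₂ := by
  rintro ⟨a₁, a₂, h0, h1, h2, h3, hline, hdiag⟩
  have hk : (1 : ℚ) ≤ (s : ℚ) * d - (r : ℚ) * e := by exact_mod_cast hw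
  have hsq : (0 : ℚ) < s := by exact_mod_cast hs
  have hsrq : (s : ℚ) < r := by exact_mod_cast hsr
  have key : (s : ℚ) * a₂ = r * ((s : ℚ) * a₁ - s * a₂) := by nlinarith [hdiag]
  nlinarith [key, hline, hk, hsq, hsrq, h3]
end

section
/- Let r ≥ 2, 0 < ℓ < r, and let integers j, s satisfy 1 ≤ j ≤ r - 2 and 2 ≤ s ≤ r - 2. If the positive integer w = sd - re satisfies w < (r² + s)/(r(j+2) + ℓ), then (ℓ/r + j - 1)·w < s(r-s) + s/r. -/
/-- Key inequality, middle case `2 ≤ s ≤ r - 2`: if the positive integer `w` satisfies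
`w < (r² + s)/(r(j+2) + ℓ)`, then `(ℓ/r + j - 1) w < s(r-s) + s/r`. -/
theorem stmt_6 (r ℓ j s w : ℤ) (hr : 2 ≤ r) (hℓ : 0 < ℓ) (hℓr : ℓ < r)
    (hj1 : 1 ≤ j) (hj2 : j ≤ r - 2) (hs1 : 2 ≤ s) (hs2 : s ≤ r - 2) (hw : 0 < w)
    (h : (w : ℚ) < ((r : ℚ) ^ 2 + s) / ((r : ℚ) * (j + 2) + ℓ)) :
    ((ℓ : ℚ) / r + j - 1) * w < (s : ℚ) * (r - s) + (s : ℚ) / r := by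
  have hr4 : 4 ≤ r := by linarith
  have hD : 0 < r * (j + 2) + ℓ := by nlinarith
  have hDq : (0 : ℚ) < (r : ℚ) * (j + 2) + ℓ := by exact_mod_cast hD
  have key : w * (r * (j + 2) + ℓ) < r ^ 2 + s := by
    have := (lt_div_iff₀ hDq).mp h
    exact_mod_cast this
  have hc : 0 < ℓ + r * (j - 1) := by nlinarith
  -- the key polynomial inequality
  have hA : 0 ≤ s * (r - s) - r := by nlinarith [mul_nonneg (by linarith : (0:ℤ) ≤ s - 2) (by linarith : (0:ℤ) ≤ r - 2 - s)]
  have h2 : (ℓ + r * (j - 1)) * (r ^ 2 + s) < (s * (r - s) * r + s) * (r * (j + 2) + ℓ) := by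
    have t1 : 0 ≤ r * (s * (r - s) - r) * (r * j + ℓ) :=
      mul_nonneg (mul_nonneg (by linarith) hA) (by nlinarith)
    have t2 : 0 < r * (2 * (s * (r - s) * r + s) + (r ^ 2 + s)) := by nlinarith
    nlinarith [t1, t2]
  have h1 : (ℓ + r * (j - 1)) * (w * (r * (j + 2) + ℓ)) < (ℓ + r * (j - 1)) * (r ^ 2 + s) :=
    mul_lt_mul_of_pos_left key hc
  have G : (ℓ + r * (j - 1)) * w < s * (r - s) * r + s := by
    have h3 : ((ℓ + r * (j - 1)) * w) * (r * (j + 2) + ℓ)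
        < (s * (r - s) * r + s) * (r * (j + 2) + ℓ) := by nlinarith
    exact lt_of_mul_lt_mul_right h3 hD.le
  have hGq : ((ℓ : ℚ) + r * (j - 1)) * w < (s : ℚ) * (r - s) * r + s := by exact_mod_cast G
  have hr0 : (0 : ℚ) < (r : ℚ) := by exact_mod_cast (by linarith : (0:ℤ) < r)
  have e1 : ((ℓ : ℚ) / r + j - 1) * w = (((ℓ : ℚ) + r * (j - 1)) * w) / r := by
    have hrne : (r:ℚ) ≠ 0 := hr0.ne'
    field_simp
    ring_nf
  have e2 : (s : ℚ) * (r - s) + (s : ℚ) / r = ((s : ℚ) * (r - s) * r + s) / r := by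
    have hrne : (r:ℚ) ≠ 0 := hr0.ne'
    field_simp
  rw [e1, e2]
  exact (div_lt_div_iff_of_pos_right hr0).2 hGq
end
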